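/- For j, m ∈ ℤ_{≥0}, the linear form ⟨(a⁺)^j k^m⟩₁₁ = ⟨χ̄₁(x)|(a⁺)^j k^m|χ₁(1)⟩ / ⟨χ̄₁(x)|χ₁(1)⟩ equals x^j p^{m/2} (-p;p)_j (x;p)_m / (-px;p)_{j+m}. -/

import Mathlib

noncomputable def aPlus (p : ℝ) (v : ℕ → ℂ) : ℕ → ℂ := fun m =>
  match m with
  | 0 => 0
  | Nat.succ m => ((Real.sqrt (1 - p ^ (2 * m + 2)) : ℝ) : ℂ) * v m

noncomputable def kOp (p : ℝ) (v : ℕ → ℂ) : ℕ → ℂ := fun m =>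
  ((p : ℂ) ^ m * ((Real.sqrt p : ℝ) : ℂ)) * v m

noncomputable def qPoch (a q : ℝ) (m : ℕ) : ℝ := ∏ i ∈ Finset.range m, (1 - a * q ^ i)

/-- Coefficients of `|χ₁(x)⟩ = (x a⁺;p)_∞^{-1}|0⟩`; the dual vector
`⟨χ̄₁(x)| = ⟨0|(x a⁻;p)_∞^{-1}` has the same coefficients. -/
noncomputable def chi1 (p x : ℝ) : ℕ → ℂ := fun m =>
  (x : ℂ) ^ m * ((Real.sqrt (qPoch (p ^ 2) (p ^ 2) m) : ℝ) : ℂ) / ((qPoch p p m : ℝ) : ℂ)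

/-- The Fock-space pairing `⟨f|g⟩ = Σ_n f_n g_n`. -/
noncomputable def pairF (f g : ℕ → ℂ) : ℂ := ∑' n : ℕ, f n * g n

/-!
Only the components `n = j + s` of the pairing survive `(a⁺)^j`, and the square roots it
produces combine with those in the coefficients of `χ₁` into
`(p²;p²)_{j+s} = (p;p)_{j+s} (-p;p)_{j+s}`. Hence the numerator is
`p^{m/2} x^j (-p;p)_j S(-p^{j+1}, p^m x)` and the denominator `S(-p, x)`, where
`S(a, z) = Σ_s (a;p)_s / (p;p)_s z^s` is the `q`-binomial series.
Instead of the product formula `S(a, z) = (az;p)_∞ / (z;p)_∞`, only its finite consequence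
`(z;p)_m S(a, z) = (az;p)_{m+j} S(a p^j, p^m z)` is needed; it follows by induction from the
contiguous relations `S(a, z) - S(a, pz) = (1 - a) z S(ap, z)` and `S(a, z) = (1 - az) S(ap, z)`.
-/

open Filter Topology

section QPochhammer

variable (a q : ℝ)

theorem qPoch_zero : qPoch a q 0 = 1 := Finset.prod_range_zero _

theorem qPoch_succ (n : ℕ) : qPoch a q (n + 1) = qPoch a q n * (1 - a * q ^ n) :=
  Finset.prod_range_succ _ _

theorem qPoch_add (m n : ℕ) : qPoch a q (m + n) = qPoch a q m * qPoch (a * q ^ m) q n := by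
  simp only [qPoch, Finset.prod_range_add, pow_add, mul_assoc]

theorem qPoch_succ' (n : ℕ) : qPoch a q (n + 1) = (1 - a) * qPoch (a * q) q n := by
  rw [add_comm, qPoch_add, pow_one]
  simp [qPoch]

theorem qPoch_sq_sq (n : ℕ) : qPoch (q ^ 2) (q ^ 2) n = qPoch q q n * qPoch (-q) q n := by
  simp only [qPoch, ← Finset.prod_mul_distrib]
  exact Finset.prod_congr rfl fun i _ => by ring

variable {a q}

theorem qPoch_pos (h : ∀ i : ℕ, a * q ^ i < 1) (n : ℕ) : 0 < qPoch a q n :=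
  Finset.prod_pos fun i _ => sub_pos.2 (h i)

theorem qPoch_nonneg (h : ∀ i : ℕ, a * q ^ i ≤ 1) (n : ℕ) : 0 ≤ qPoch a q n :=
  Finset.prod_nonneg fun i _ => sub_nonneg.2 (h i)

end QPochhammer

section QBinomialSeries

noncomputable def qBinomialCoeff (a q : ℝ) (s : ℕ) : ℝ := qPoch a q s / qPoch q q s

noncomputable def qBinomialSeries (a q z : ℝ) : ℝ := ∑' s : ℕ, qBinomialCoeff a q s * z ^ s

theorem qBinomialCoeff_zero (a q : ℝ) : qBinomialCoeff a q 0 = 1 := by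
  simp [qBinomialCoeff, qPoch_zero]

variable {a q z : ℝ} (hq0 : 0 ≤ q) (hq1 : q < 1)
include hq0 hq1

theorem qPoch_self_pos (n : ℕ) : 0 < qPoch q q n :=
  qPoch_pos (fun i => by
    rw [← pow_succ']; exact pow_lt_one₀ hq0 hq1 (Nat.succ_ne_zero i)) n

theorem abs_pow_mul_lt_one (hz : |z| < 1) (m : ℕ) : |q ^ m * z| < 1 := by
  rw [abs_mul, abs_of_nonneg (pow_nonneg hq0 m)]
  nlinarith [abs_nonneg z, pow_le_one₀ hq0 hq1.le (n := m)]

theorem qBinomialCoeff_succ (s : ℕ) :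
    qBinomialCoeff a q (s + 1) = qBinomialCoeff a q s * (1 - a * q ^ s) / (1 - q ^ (s + 1)) := by
  have h1 : 1 - q ^ (s + 1) ≠ 0 := (sub_pos.2 (pow_lt_one₀ hq0 hq1 s.succ_ne_zero)).ne'
  have h2 := (qPoch_self_pos hq0 hq1 s).ne'
  simp only [qBinomialCoeff, qPoch_succ, pow_succ' q s]
  field_simp

theorem qBinomialCoeff_succ_mul (s : ℕ) :
    qBinomialCoeff a q (s + 1) * (1 - q ^ (s + 1)) = (1 - a) * qBinomialCoeff (a * q) q s := by
  have h1 : 1 - q ^ (s + 1) ≠ 0 := (sub_pos.2 (pow_lt_one₀ hq0 hq1 s.succ_ne_zero)).ne'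
  have h2 := (qPoch_self_pos hq0 hq1 s).ne'
  simp only [qBinomialCoeff, qPoch_succ' a, qPoch_succ q q s, ← pow_succ']
  field_simp

theorem qBinomialCoeff_sub_mul_succ (s : ℕ) :
    qBinomialCoeff a q (s + 1) - qBinomialCoeff (a * q) q (s + 1) =
      -a * qBinomialCoeff (a * q) q s := by
  have h1 : 1 - q ^ (s + 1) ≠ 0 := (sub_pos.2 (pow_lt_one₀ hq0 hq1 s.succ_ne_zero)).ne'
  have h2 := (qPoch_self_pos hq0 hq1 s).ne'
  rw [pow_succ'] at h1
  simp only [qBinomialCoeff, qPoch_succ' a, qPoch_succ (a * q) q s, qPoch_succ q q s]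
  field_simp
  ring

theorem summable_qBinomialSeries (hz : |z| < 1) :
    Summable fun s => qBinomialCoeff a q s * z ^ s := by
  have hpow : Tendsto (fun s : ℕ => q ^ s) atTop (𝓝 0) :=
    tendsto_pow_atTop_nhds_zero_of_lt_one hq0 hq1
  have hratio : Tendsto (fun s : ℕ => |z| * |1 - a * q ^ s| / (1 - q * q ^ s)) atTop (𝓝 |z|) := by
    have hden : Tendsto (fun s : ℕ => 1 - q * q ^ s) atTop (𝓝 1) := by
      simpa using tendsto_const_nhds.sub (hpow.const_mul q)
    simpa [Pi.div_def] using
      ((tendsto_const_nhds (x := (1 : ℝ)).sub (hpow.const_mul a)).abs.const_mul |z|).div hden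
        one_ne_zero
  refine summable_of_ratio_norm_eventually_le (r := (1 + |z|) / 2) (by linarith) ?_
  filter_upwards [hratio.eventually (ge_mem_nhds (show |z| < (1 + |z|) / 2 by linarith))]
    with s hs
  have hden : 0 < 1 - q * q ^ s := by
    rw [← pow_succ']; exact sub_pos.2 (pow_lt_one₀ hq0 hq1 s.succ_ne_zero)
  calc ‖qBinomialCoeff a q (s + 1) * z ^ (s + 1)‖
      = |z| * |1 - a * q ^ s| / (1 - q * q ^ s) * ‖qBinomialCoeff a q s * z ^ s‖ := by
        rw [qBinomialCoeff_succ hq0 hq1, pow_succ' q s]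
        simp only [norm_mul, norm_div, norm_pow, Real.norm_eq_abs, abs_of_pos hden]
        field_simp
        ring
    _ ≤ (1 + |z|) / 2 * ‖qBinomialCoeff a q s * z ^ s‖ := by gcongr

theorem qBinomialSeries_sub_qBinomialSeries_mul (hz : |z| < 1) :
    qBinomialSeries a q z - qBinomialSeries a q (q * z) =
      (1 - a) * z * qBinomialSeries (a * q) q z := by
  have hqz : |q * z| < 1 := by simpa using abs_pow_mul_lt_one hq0 hq1 hz 1
  have hsum := (summable_qBinomialSeries (a := a) hq0 hq1 hz).sub
    (summable_qBinomialSeries (a := a) hq0 hq1 hqz)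
  unfold qBinomialSeries
  rw [← (summable_qBinomialSeries hq0 hq1 hz).tsum_sub (summable_qBinomialSeries hq0 hq1 hqz),
    hsum.tsum_eq_zero_add, ← tsum_mul_left]
  simp only [pow_zero, mul_one, sub_self, zero_add]
  refine tsum_congr fun s => ?_
  linear_combination z ^ (s + 1) * qBinomialCoeff_succ_mul (a := a) hq0 hq1 s

theorem qBinomialSeries_eq_mul_qBinomialSeries (hz : |z| < 1) :
    qBinomialSeries a q z = (1 - a * z) * qBinomialSeries (a * q) q z := by
  have hsum := (summable_qBinomialSeries (a := a) hq0 hq1 hz).sub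
    (summable_qBinomialSeries (a := a * q) hq0 hq1 hz)
  have key : qBinomialSeries a q z - qBinomialSeries (a * q) q z =
      -a * z * qBinomialSeries (a * q) q z := by
    unfold qBinomialSeries
    rw [← (summable_qBinomialSeries hq0 hq1 hz).tsum_sub (summable_qBinomialSeries hq0 hq1 hz),
      hsum.tsum_eq_zero_add, ← tsum_mul_left]
    simp only [qBinomialCoeff_zero, sub_self, zero_add]
    refine tsum_congr fun s => ?_
    linear_combination z ^ (s + 1) * qBinomialCoeff_sub_mul_succ (a := a) hq0 hq1 s
  linear_combination key

theorem one_sub_mul_qBinomialSeries (hz : |z| < 1) :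
    (1 - z) * qBinomialSeries a q z = (1 - a * z) * qBinomialSeries a q (q * z) := by
  linear_combination (1 - a * z) * qBinomialSeries_sub_qBinomialSeries_mul (a := a) hq0 hq1 hz -
    (1 - a) * z * qBinomialSeries_eq_mul_qBinomialSeries (a := a) hq0 hq1 hz

theorem qBinomialSeries_eq_qPoch_mul (hz : |z| < 1) (j : ℕ) :
    qBinomialSeries a q z = qPoch (a * z) q j * qBinomialSeries (a * q ^ j) q z := by
  induction j with
  | zero => simp [qPoch_zero]
  | succ j ih =>
    rw [ih, qBinomialSeries_eq_mul_qBinomialSeries hq0 hq1 hz, qPoch_succ, pow_succ,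
      ← mul_assoc a (q ^ j) q]
    ring

theorem qPoch_mul_qBinomialSeries_eq_qPoch_mul (hz : |z| < 1) (m : ℕ) :
    qPoch z q m * qBinomialSeries a q z =
      qPoch (a * z) q m * qBinomialSeries a q (q ^ m * z) := by
  induction m with
  | zero => simp [qPoch_zero]
  | succ m ih =>
    have step := one_sub_mul_qBinomialSeries (a := a) hq0 hq1 (abs_pow_mul_lt_one hq0 hq1 hz m)
    rw [qPoch_succ, qPoch_succ, pow_succ', mul_assoc q]
    linear_combination qPoch (a * z) q m * step + (1 - z * q ^ m) * ih

theorem qPoch_mul_qBinomialSeries_eq_qPoch_add_mul (hz : |z| < 1) (m j : ℕ) :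
    qPoch z q m * qBinomialSeries a q z =
      qPoch (a * z) q (m + j) * qBinomialSeries (a * q ^ j) q (q ^ m * z) := by
  rw [qPoch_mul_qBinomialSeries_eq_qPoch_mul hq0 hq1 hz,
    qBinomialSeries_eq_qPoch_mul hq0 hq1 (abs_pow_mul_lt_one hq0 hq1 hz m) j, qPoch_add]
  ring_nf

theorem one_le_qBinomialSeries (ha : a ≤ 1) (hz0 : 0 ≤ z) (hz1 : z < 1) :
    1 ≤ qBinomialSeries a q z := by
  have hterm : ∀ s, 0 ≤ qBinomialCoeff a q s * z ^ s := fun s =>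
    mul_nonneg (div_nonneg (qPoch_nonneg (fun i => by
      nlinarith [pow_nonneg hq0 i, pow_le_one₀ hq0 hq1.le (n := i)]) s)
      (qPoch_self_pos hq0 hq1 s).le) (pow_nonneg hz0 s)
  simpa [qBinomialSeries, qBinomialCoeff_zero] using
    (summable_qBinomialSeries (a := a) hq0 hq1 (abs_lt.2 ⟨by linarith, hz1⟩)).le_tsum 0
      fun s _ => hterm s

end QBinomialSeries

section FockSpace

variable {p : ℝ}

theorem kOp_iterate_apply (v : ℕ → ℂ) (m n : ℕ) :
    (kOp p)^[m] v n = ((p : ℂ) ^ n * ((√p : ℝ) : ℂ)) ^ m * v n := by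
  induction m with
  | zero => simp
  | succ m ih => rw [Function.iterate_succ_apply', kOp, ih]; ring

theorem aPlus_iterate_apply_of_lt (v : ℕ → ℂ) {j n : ℕ} (h : n < j) :
    (aPlus p)^[j] v n = 0 := by
  induction j generalizing n with
  | zero => omega
  | succ j ih =>
    rw [Function.iterate_succ_apply']
    cases n with
    | zero => rfl
    | succ n => exact mul_eq_zero_of_right _ (ih (by omega))

theorem aPlus_iterate_apply_add (hp : p ^ 2 ≤ 1) (v : ℕ → ℂ) (j s : ℕ) :
    (aPlus p)^[j] v (j + s) = ((√(qPoch (p ^ 2 * (p ^ 2) ^ s) (p ^ 2) j) : ℝ) : ℂ) * v s := by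
  induction j with
  | zero => simp [qPoch_zero]
  | succ j ih =>
    have hnonneg : 0 ≤ qPoch (p ^ 2 * (p ^ 2) ^ s) (p ^ 2) j := qPoch_nonneg (fun i => by
      rw [← pow_succ', ← pow_add]; exact pow_le_one₀ (sq_nonneg p) hp) j
    rw [Function.iterate_succ_apply', show j + 1 + s = (j + s) + 1 by omega, aPlus, ih,
      qPoch_succ, Real.sqrt_mul hnonneg]
    push_cast
    ring_nf

end FockSpace

section Pairing

variable {p : ℝ} (hp0 : 0 < p) (hp1 : p < 1)
include hp0 hp1

theorem sqrt_qPoch_sq_mul (j s : ℕ) :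
    √(qPoch (p ^ 2) (p ^ 2) (j + s)) *
        (√(qPoch (p ^ 2 * (p ^ 2) ^ s) (p ^ 2) j) * √(qPoch (p ^ 2) (p ^ 2) s)) =
      qPoch p p (j + s) * (qPoch (-p) p j * qPoch (-p * p ^ j) p s) := by
  have hp2 : 0 ≤ p ^ 2 := sq_nonneg p
  have hp21 : p ^ 2 < 1 := pow_lt_one₀ hp0.le hp1 two_ne_zero
  have hnonneg : 0 ≤ qPoch (p ^ 2) (p ^ 2) s :=
    (qPoch_self_pos hp2 hp21 s).le
  rw [← Real.sqrt_mul' _ hnonneg, mul_comm (qPoch _ _ j), ← qPoch_add, add_comm s,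
    Real.mul_self_sqrt (qPoch_self_pos hp2 hp21 _).le, qPoch_sq_sq, qPoch_add (-p) p j s]

theorem chi1_mul_aPlus_kOp_chi1 (x : ℝ) (j m s : ℕ) :
    chi1 p x (j + s) * (aPlus p)^[j] ((kOp p)^[m] (chi1 p 1)) (j + s) =
      ((√p ^ m * x ^ j * qPoch (-p) p j * (qBinomialCoeff (-p * p ^ j) p s * (p ^ m * x) ^ s) :
        ℝ) : ℂ) := by
  have hP := (qPoch_self_pos hp0.le hp1 (j + s)).ne'
  have hPs := (qPoch_self_pos hp0.le hp1 s).ne'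
  have hreal : x ^ (j + s) * √(qPoch (p ^ 2) (p ^ 2) (j + s)) / qPoch p p (j + s) *
      (√(qPoch (p ^ 2 * (p ^ 2) ^ s) (p ^ 2) j) *
        ((p ^ s * √p) ^ m * (1 ^ s * √(qPoch (p ^ 2) (p ^ 2) s) / qPoch p p s))) =
      √p ^ m * x ^ j * qPoch (-p) p j * (qBinomialCoeff (-p * p ^ j) p s * (p ^ m * x) ^ s) := by
    calc _ = x ^ (j + s) * (p ^ s * √p) ^ m * (√(qPoch (p ^ 2) (p ^ 2) (j + s)) *
          (√(qPoch (p ^ 2 * (p ^ 2) ^ s) (p ^ 2) j) * √(qPoch (p ^ 2) (p ^ 2) s))) /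
          (qPoch p p (j + s) * qPoch p p s) := by ring
      _ = _ := by
        rw [sqrt_qPoch_sq_mul hp0 hp1, qBinomialCoeff]
        field_simp
        ring
  rw [aPlus_iterate_apply_add (pow_le_one₀ hp0.le hp1.le), kOp_iterate_apply, ← hreal]
  simp only [chi1]
  push_cast
  ring

theorem pairF_chi1_aPlus_kOp_chi1 (x : ℝ) (j m : ℕ) :
    pairF (chi1 p x) ((aPlus p)^[j] ((kOp p)^[m] (chi1 p 1))) =
      ((√p ^ m * x ^ j * qPoch (-p) p j * qBinomialSeries (-p * p ^ j) p (p ^ m * x) : ℝ) :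
        ℂ) := by
  have hsupport : Function.support (fun n => chi1 p x n *
      (aPlus p)^[j] ((kOp p)^[m] (chi1 p 1)) n) ⊆ Set.range (j + ·) := by
    intro n hn
    by_cases h : n < j
    · exact absurd (mul_eq_zero_of_right _ (aPlus_iterate_apply_of_lt _ h)) hn
    · exact ⟨n - j, show j + (n - j) = n by omega⟩
  rw [pairF, ← (add_right_injective j).tsum_eq hsupport]
  simp only [chi1_mul_aPlus_kOp_chi1 hp0 hp1, qBinomialSeries, ← Complex.ofReal_tsum,
    tsum_mul_left]

theorem pairF_chi1_chi1 (x : ℝ) :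
    pairF (chi1 p x) (chi1 p 1) = (qBinomialSeries (-p) p x : ℂ) := by
  simpa [qPoch_zero] using pairF_chi1_aPlus_kOp_chi1 hp0 hp1 x 0 0

end Pairing

/-- `⟨(a⁺)^j k^m⟩₁₁ = x^j p^{m/2} (-p;p)_j (x;p)_m / (-px;p)_{j+m}`. -/
theorem bracket11_aPlus (p x : ℝ) (hp : 0 < p) (hp1 : p < 1) (hx : 0 < x) (hx1 : x < 1)
    (j m : ℕ) :
    pairF (chi1 p x) ((aPlus p)^[j] ((kOp p)^[m] (chi1 p 1))) /
        pairF (chi1 p x) (chi1 p 1) =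
      (x : ℂ) ^ j * ((Real.sqrt p : ℝ) : ℂ) ^ m *
        ((qPoch (-p) p j : ℝ) : ℂ) * ((qPoch x p m : ℝ) : ℂ) /
        ((qPoch (-(p * x)) p (j + m) : ℝ) : ℂ) := by
  have hS : qBinomialSeries (-p) p x ≠ 0 :=
    (zero_lt_one.trans_le (one_le_qBinomialSeries hp.le hp1 (by linarith) hx.le hx1)).ne'
  have hQ : qPoch (-(p * x)) p (j + m) ≠ 0 :=
    (qPoch_pos (fun i => by nlinarith [mul_pos (mul_pos hp hx) (pow_pos hp i)]) _).ne'
  have key := qPoch_mul_qBinomialSeries_eq_qPoch_add_mul (a := -p) hp.le hp1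
    (abs_lt.2 ⟨by linarith, hx1⟩) m j
  rw [neg_mul, add_comm m j] at key
  have hreal : √p ^ m * x ^ j * qPoch (-p) p j * qBinomialSeries (-p * p ^ j) p (p ^ m * x) *
      qPoch (-(p * x)) p (j + m) =
      x ^ j * √p ^ m * qPoch (-p) p j * qPoch x p m * qBinomialSeries (-p) p x := by
    linear_combination (√p ^ m * x ^ j * qPoch (-p) p j) * key.symm
  rw [pairF_chi1_aPlus_kOp_chi1 hp hp1, pairF_chi1_chi1 hp hp1,
    div_eq_div_iff (Complex.ofReal_ne_zero.2 hS) (Complex.ofReal_ne_zero.2 hQ)]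
  exact_mod_cast hreal
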